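/- arXiv:1807.09389 — 6 statements merged into one kernel-verified Lean document; each statement's English description precedes it below -/
import Mathlib

section
/- If k_1, …, k_t are nonnegative integers with k_i ≤ n/2 for all i and Σ_i k_i = n − 1 for some integer n ≥ 1, then Σ_{i<j} k_i k_j ≥ (n−1)(n−2)/4. -/
/-!
Expanding `(∑ kᵢ)² = ∑ kᵢ² + 2 ∑_{i<j} kᵢ kⱼ` and bounding `∑ kᵢ² ≤ (n/2) ∑ kᵢ = n(n-1)/2`
gives `2 ∑_{i<j} kᵢ kⱼ ≥ (n-1)² - n(n-1)/2 = (n-1)(n-2)/2`.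
-/

open Finset

theorem sq_sum_eq_sum_sq_add_two_mul_sum_lt {ι R : Type*} [Fintype ι] [LinearOrder ι]
    [CommSemiring R] (a : ι → R) :
    (∑ i, a i) ^ 2 =
      ∑ i, a i ^ 2 + 2 * ∑ p ∈ univ.filter (fun p : ι × ι => p.1 < p.2), a p.1 * a p.2 := by
  have hdiag : ∑ p ∈ univ.filter (fun p : ι × ι => p.1 = p.2), a p.1 * a p.2 = ∑ i, a i ^ 2 :=
    sum_nbij' Prod.fst (fun i => (i, i)) (by simp) (by simp)
      (by rintro ⟨i, j⟩ h; simp_all) (by simp) (by rintro ⟨i, j⟩ h; simp_all [sq])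
  have hswap : ∑ p ∈ univ.filter (fun p : ι × ι => p.2 < p.1), a p.1 * a p.2 =
      ∑ p ∈ univ.filter (fun p : ι × ι => p.1 < p.2), a p.1 * a p.2 :=
    sum_equiv (Equiv.prodComm ι ι) (by simp) (fun _ _ => mul_comm _ _)
  have htrichotomy : ∀ p : ι × ι, a p.1 * a p.2 =
      (if p.1 < p.2 then a p.1 * a p.2 else 0) + (if p.1 = p.2 then a p.1 * a p.2 else 0) +
        (if p.2 < p.1 then a p.1 * a p.2 else 0) := by
    rintro ⟨i, j⟩
    rcases lt_trichotomy i j with h | rfl | h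
    · simp [h, h.not_gt, h.ne]
    · simp
    · simp [h, h.not_gt, h.ne']
  calc (∑ i, a i) ^ 2 = ∑ p : ι × ι, a p.1 * a p.2 := by
        rw [sq, sum_mul_sum, ← Fintype.sum_prod_type']
    _ = _ := by
        rw [sum_congr rfl fun p _ => htrichotomy p]
        simp only [sum_add_distrib, ← sum_filter, hdiag, hswap]
        ring

theorem Finset.sum_sq_le_mul_sum_of_le {ι R : Type*} [Semiring R] [PartialOrder R]
    [IsOrderedRing R] {s : Finset ι} {f : ι → R} {M : R} (h0 : ∀ i ∈ s, 0 ≤ f i)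
    (hM : ∀ i ∈ s, f i ≤ M) : ∑ i ∈ s, f i ^ 2 ≤ M * ∑ i ∈ s, f i := by
  rw [mul_sum]
  exact sum_le_sum fun i hi => by
    rw [sq]; exact mul_le_mul_of_nonneg_right (hM i hi) (h0 i hi)

theorem sum_pairwise_products_lower_bound_general (n t : ℕ)
    (k : Fin t → ℕ) (hk : ∀ i, (k i : ℝ) ≤ (n : ℝ) / 2)
    (hsum : (∑ i, (k i : ℝ)) = (n : ℝ) - 1) :
    ((n : ℝ) - 1) * ((n : ℝ) - 2) / 4 ≤
      ∑ p ∈ Finset.univ.filter (fun p : Fin t × Fin t => p.1 < p.2), (k p.1 : ℝ) * (k p.2 : ℝ) := by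
  have hsq := sq_sum_eq_sum_sq_add_two_mul_sum_lt fun i => (k i : ℝ)
  have hsq_le := sum_sq_le_mul_sum_of_le (s := univ) (fun i _ => Nat.cast_nonneg (k i))
    fun i _ => hk i
  rw [hsum] at hsq hsq_le
  linarith

/-- If `k₁, …, k_t` are nonnegative integers with `kᵢ ≤ n / 2` for all `i` and
`∑ kᵢ = n - 1` for an integer `n ≥ 1`, then `∑_{i<j} kᵢ kⱼ ≥ (n-1)(n-2)/4`. -/
theorem sum_pairwise_products_lower_bound (n t : ℕ) (hn : 1 ≤ n) (ht : 1 ≤ t)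
    (k : Fin t → ℕ) (hk : ∀ i, (k i : ℝ) ≤ (n : ℝ) / 2)
    (hsum : (∑ i, (k i : ℝ)) = (n : ℝ) - 1) :
    ((n : ℝ) - 1) * ((n : ℝ) - 2) / 4 ≤
      ∑ p ∈ Finset.univ.filter (fun p : Fin t × Fin t => p.1 < p.2), (k p.1 : ℝ) * (k p.2 : ℝ) :=
  sum_pairwise_products_lower_bound_general n t k hk hsum
end

section
/- For real x ≥ 1, t ≥ 1 and real p ≥ 1, we have (x + t)^p − x^p ≤ e^{t(p−1)/x} · t · p · x^{p−1}. -/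
/-! By convexity of `y ↦ y ^ p`, the difference `(x + t) ^ p - x ^ p` is at most the tangent slope
at `x + t` times `t`, i.e. `p t (x + t) ^ (p - 1)`; and `(x + t) / x = 1 + t / x ≤ e ^ (t / x)`
turns `(x + t) ^ (p - 1)` into at most `e ^ (t (p - 1) / x) x ^ (p - 1)`. -/

open Real Set

theorem rpow_sub_rpow_le_mul_rpow_sub_one {a b p : ℝ} (ha : 0 ≤ a) (hab : a ≤ b) (hp : 1 ≤ p) :
    b ^ p - a ^ p ≤ p * b ^ (p - 1) * (b - a) := by
  rcases hab.eq_or_lt with rfl | hlt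
  · simp
  have hslope := (convexOn_rpow hp).slope_le_of_hasDerivAt (mem_Ici.2 ha)
    (mem_Ici.2 (ha.trans hlt.le)) hlt (hasDerivAt_rpow_const (Or.inr hp))
  rwa [slope_def_field, div_le_iff₀ (sub_pos.2 hlt)] at hslope

theorem add_rpow_le_exp_mul_rpow {x t q : ℝ} (hx : 0 < x) (ht : 0 ≤ t) (hq : 0 ≤ q) :
    (x + t) ^ q ≤ exp (t * q / x) * x ^ q := by
  have hratio : (x + t) / x ≤ exp (t / x) := by
    rw [add_div, div_self hx.ne', add_comm]
    exact add_one_le_exp _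
  calc (x + t) ^ q = ((x + t) / x) ^ q * x ^ q := by
        rw [div_rpow (by positivity) hx.le, div_mul_cancel₀ _ (rpow_pos_of_pos hx q).ne']
    _ ≤ exp (t / x) ^ q * x ^ q := by gcongr
    _ = exp (t * q / x) * x ^ q := by rw [← exp_mul, div_mul_eq_mul_div]

/-- For reals `x ≥ 1`, `t ≥ 1` and `p ≥ 1`:
`(x + t)^p - x^p ≤ e^(t(p-1)/x) · t · p · x^(p-1)`. -/
theorem rpow_diff_upper_bound (x t p : ℝ) (hx : 1 ≤ x) (ht : 1 ≤ t) (hp : 1 ≤ p) :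
    (x + t) ^ p - x ^ p ≤ Real.exp (t * (p - 1) / x) * t * p * x ^ (p - 1) := by
  have hx0 : 0 ≤ x := by linarith
  calc (x + t) ^ p - x ^ p ≤ p * (x + t) ^ (p - 1) * t := by
        simpa using rpow_sub_rpow_le_mul_rpow_sub_one hx0 (le_add_of_nonneg_right (by linarith)) hp
    _ ≤ p * (exp (t * (p - 1) / x) * x ^ (p - 1)) * t := by
        gcongr
        exact add_rpow_le_exp_mul_rpow (by linarith) (by linarith) (by linarith)
    _ = exp (t * (p - 1) / x) * t * p * x ^ (p - 1) := by ring
end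

section
/- If H is a feasible hub labeling of a tree T, and for each vertex u the subtree T_u is defined as the union of the paths P_{uv} over all v ∈ H_u, then any two such subtrees intersect: T_u ∩ T_v ≠ ∅ for all u, v; consequently all the subtrees T_u share a common vertex. -/
/-- `H` is a (feasible) hub labeling of `G`. -/
def IsHubLabeling {V : Type*} (G : SimpleGraph V) (H : V → Set V) : Prop :=
  ∀ u v : V, ∃ w, w ∈ H u ∧ w ∈ H v ∧ ∀ p : G.Walk u v, p.IsPath → w ∈ p.support

/-- The subtree `T_u`: the union of the (unique) paths `P_{uv}` over all hubs `v ∈ H u`. -/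
def hubSubtree {V : Type*} (G : SimpleGraph V) (H : V → Set V) (u : V) : Set V :=
  {w | ∃ v ∈ H u, ∀ p : G.Walk u v, p.IsPath → w ∈ p.support}

/-!
Subtrees of a tree have the Helly property. Root the tree at `r` and let the gate of a subtree
be its vertex closest to `r`; it lies on the path from `r` to every vertex of the subtree. Given
pairwise intersecting subtrees, take the gate `g₀` farthest from `r`. For any other subtree `S`
with gate `g`, pick `y` in `S` and in the subtree of `g₀`: both gates lie on the path from `r` to
`y`, so `g₀` either lies between `r` and `g`, hence equals `g` by the choice of `g₀`, or between
`g` and `y`, hence in `S`. Each `T_u` is a subtree, being a union of paths from `u`, and the hub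
labeling makes the `T_u` pairwise intersect, since a common hub of `u` and `v` lies in both.
-/

namespace SimpleGraph

variable {V : Type*} {G : SimpleGraph V}

def IsPathConvex (G : SimpleGraph V) (S : Set V) : Prop :=
  ∀ ⦃a⦄, a ∈ S → ∀ ⦃b⦄, b ∈ S → ∀ p : G.Walk a b, p.IsPath → ∀ x ∈ p.support, x ∈ S

theorem Walk.IsPath.append {u v w : V} {p : G.Walk u v} {q : G.Walk v w} (hp : p.IsPath)
    (hq : q.IsPath) (h : ∀ x ∈ p.support, x ∈ q.support → x = v) : (p.append q).IsPath := by
  rw [Walk.isPath_def, Walk.support_append]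
  refine hp.support_nodup.append ((List.tail_sublist _).nodup hq.support_nodup) ?_
  intro a hap haq
  have hnodup := hq.support_nodup
  rw [← q.cons_tail_support, List.nodup_cons] at hnodup
  exact hnodup.1 (h a hap (List.mem_of_mem_tail haq) ▸ haq)

namespace IsTree

variable (hG : G.IsTree)

noncomputable def path (u v : V) : G.Walk u v :=
  (hG.existsUnique_path u v).exists.choose

theorem isPath_path (u v : V) : (hG.path u v).IsPath :=
  (hG.existsUnique_path u v).exists.choose_spec

theorem eq_path {u v : V} {p : G.Walk u v} (hp : p.IsPath) : p = hG.path u v :=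
  (hG.existsUnique_path u v).unique hp (hG.isPath_path u v)

variable {hG}

theorem path_append_path {u v a : V} (h : a ∈ (hG.path u v).support) :
    (hG.path u a).append (hG.path a v) = hG.path u v := by
  classical
  rw [← hG.eq_path ((hG.isPath_path u v).takeUntil h),
    ← hG.eq_path ((hG.isPath_path u v).dropUntil h), Walk.take_spec]

theorem support_path_subset {u v a : V} (h : a ∈ (hG.path u v).support) :
    (hG.path u a).support ⊆ (hG.path u v).support := by
  rw [← path_append_path h]
  exact Walk.support_subset_support_append_left _ _

theorem eq_of_mem_support_path_of_length_le {u v a : V} (h : a ∈ (hG.path u v).support)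
    (hl : (hG.path u v).length ≤ (hG.path u a).length) : a = v := by
  have hlen := congrArg Walk.length (path_append_path h)
  rw [Walk.length_append] at hlen
  exact Walk.eq_of_length_eq_zero (p := hG.path a v) (by omega)

theorem mem_or_mem_of_mem_support_path (u : V) {a b x : V} (hx : x ∈ (hG.path a b).support) :
    x ∈ (hG.path u a).support ∨ x ∈ (hG.path u b).support := by
  classical
  let W := (hG.path u a).reverse.append (hG.path u b)
  rw [← hG.eq_path W.bypass_isPath] at hx
  have hxW : x ∈ W.support := W.support_bypass_subset_support hx
  rwa [Walk.mem_support_append_iff, Walk.support_reverse, List.mem_reverse] at hxW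

theorem isPathConvex_setOf_mem_support_path (u : V) (A : Set V) :
    G.IsPathConvex {x | ∃ v ∈ A, x ∈ (hG.path u v).support} := by
  rintro a ⟨va, hva, ha⟩ b ⟨vb, hvb, hb⟩ p hp x hx
  rw [hG.eq_path hp] at hx
  rcases mem_or_mem_of_mem_support_path u hx with h | h
  · exact ⟨va, hva, support_path_subset ha h⟩
  · exact ⟨vb, hvb, support_path_subset hb h⟩

/-- The vertex of `S` closest to `r` lies on the path from `r` to every vertex of `S`. -/
theorem exists_mem_forall_mem_support_path {S : Set V} (hS : G.IsPathConvex S)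
    (hne : S.Nonempty) (r : V) : ∃ g ∈ S, ∀ x ∈ S, g ∈ (hG.path r x).support := by
  let g := Function.argminOn (fun x => (hG.path r x).length) S hne
  have hgS : g ∈ S := Function.argminOn_mem _ S hne
  refine ⟨g, hgS, fun x hx => ?_⟩
  have hmeet : ∀ y ∈ (hG.path r g).support, y ∈ (hG.path g x).support → y = g :=
    fun y hy hyx => eq_of_mem_support_path_of_length_le hy <| Function.argminOn_le
      (fun x => (hG.path r x).length) S (hS hgS hx _ (hG.isPath_path g x) y hyx)
  rw [← hG.eq_path ((hG.isPath_path r g).append (hG.isPath_path g x) hmeet)]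
  exact Walk.support_subset_support_append_left _ _ (Walk.end_mem_support _)

theorem iInter_nonempty_of_pairwise_inter_nonempty (hG : G.IsTree) {ι : Type*} [Finite ι]
    {S : ι → Set V} (hS : ∀ i, G.IsPathConvex (S i)) (hpair : ∀ i j, (S i ∩ S j).Nonempty) :
    (⋂ i, S i).Nonempty := by
  rcases isEmpty_or_nonempty ι with _ | _
  · have := hG.connected.nonempty
    rw [Set.iInter_of_empty]
    exact Set.univ_nonempty
  obtain ⟨r⟩ := hG.connected.nonempty
  choose g hgS hg using fun i =>
    exists_mem_forall_mem_support_path (hG := hG) (hS i)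
      ((hpair i i).mono Set.inter_subset_left) r
  obtain ⟨i₀, hi₀⟩ := Finite.exists_max fun i => (hG.path r (g i)).length
  refine ⟨g i₀, Set.mem_iInter.mpr fun i => ?_⟩
  obtain ⟨y, hyi, hyi₀⟩ := hpair i i₀
  have hgi := hg i y hyi
  have hgi₀ := hg i₀ y hyi₀
  rw [← path_append_path hgi, Walk.mem_support_append_iff] at hgi₀
  rcases hgi₀ with hbefore | hafter
  · rw [eq_of_mem_support_path_of_length_le hbefore (hi₀ i)]
    exact hgS i
  · exact hS i (hgS i) hyi _ (hG.isPath_path _ _) _ hafter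

end IsTree

end SimpleGraph

open SimpleGraph

theorem hubSubtree_eq_setOf_mem_support_path {V : Type*} {G : SimpleGraph V} (hG : G.IsTree)
    (H : V → Set V) (u : V) :
    hubSubtree G H u = {x | ∃ v ∈ H u, x ∈ (hG.path u v).support} := by
  ext x
  refine ⟨fun ⟨v, hv, hx⟩ => ⟨v, hv, hx _ (hG.isPath_path u v)⟩, fun ⟨v, hv, hx⟩ => ?_⟩
  exact ⟨v, hv, fun p hp => hG.eq_path hp ▸ hx⟩

theorem mem_hubSubtree_of_mem {V : Type*} {G : SimpleGraph V} {H : V → Set V} {u v : V}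
    (hv : v ∈ H u) : v ∈ hubSubtree G H u :=
  ⟨v, hv, fun p _ => p.end_mem_support⟩

theorem hub_subtrees_intersect_general {V : Type*} [Fintype V]
    (G : SimpleGraph V) (hG : G.IsTree) (H : V → Set V) (hH : IsHubLabeling G H) :
    (∀ u v : V, (hubSubtree G H u ∩ hubSubtree G H v).Nonempty) ∧
      (⋂ u : V, hubSubtree G H u).Nonempty := by
  have hpair : ∀ u v : V, (hubSubtree G H u ∩ hubSubtree G H v).Nonempty := fun u v => by
    obtain ⟨w, hwu, hwv, -⟩ := hH u v
    exact ⟨w, mem_hubSubtree_of_mem hwu, mem_hubSubtree_of_mem hwv⟩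
  have hconvex : ∀ u, G.IsPathConvex (hubSubtree G H u) := fun u => by
    rw [hubSubtree_eq_setOf_mem_support_path hG]
    exact hG.isPathConvex_setOf_mem_support_path u (H u)
  exact ⟨hpair, hG.iInter_nonempty_of_pairwise_inter_nonempty hconvex hpair⟩

/-- For a feasible hub labeling `H` of a tree, the subtrees `T_u = ⋃_{v ∈ H u} P_{uv}`
pairwise intersect, and consequently (Helly property) all of them share a common vertex. -/
theorem hub_subtrees_intersect {V : Type*} [Fintype V] [Nonempty V]
    (G : SimpleGraph V) (hG : G.IsTree) (H : V → Set V) (hH : IsHubLabeling G H) :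
    (∀ u v : V, (hubSubtree G H u ∩ hubSubtree G H v).Nonempty) ∧
      (⋂ u : V, hubSubtree G H u).Nonempty :=
  hub_subtrees_intersect_general G hG H hH
end

section
/- Restrictions of a hub labeling to disjoint subtrees are feasible and cost-superadditive: if T is a tree partitioned into vertex-disjoint subtrees T_1, …, T_j, and H is a feasible hub labeling of T, then for each i the restriction H^{(i)}_u = H_u ∩ V(T_i) (for u ∈ T_i) is a feasible hub labeling of T_i, and hence Σ_i OPT_p(T_i)^p ≤ OPT_p(T)^p for any p ≥ 1, where OPT_p denotes the minimum ℓ_p-cost raised appropriately. -/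
/-- `OPT_p(G)^p`: the minimum over feasible hub labelings `H` of `∑_u |H_u|^p`. -/
noncomputable def OPTpPow {V : Type*} (G : SimpleGraph V) (p : ℝ) : ℝ :=
  sInf {c : ℝ | ∃ H : V → Set V, IsHubLabeling G H ∧
    c = ∑ᶠ u : V, (Nat.card (H u) : ℝ) ^ p}

/-!
A common hub of `u, v ∈ s` lies on a path of `G.induce s` (which is a path of `G`), hence in `s`,
and it meets every path of the induced graph, so restriction preserves feasibility. Restricting
any labeling of `T` to the blocks thus gives feasible labelings of the `Tᵢ`; their costs only
shrink (`x ↦ x ^ p` is monotone for `p ≥ 0`), and since the blocks partition the vertices they add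
up to at most the cost of the original labeling.
-/

open SimpleGraph Function

section Restriction

variable {V : Type*} {G : SimpleGraph V} {s : Set V} {H : V → Set V}

lemma SimpleGraph.Walk.mem_support_map_induce {u v : s} (q : (G.induce s).Walk u v) {w : V}
    (hw : w ∈ (q.map (Embedding.induce s).toHom).support) :
    ∃ hws : w ∈ s, (⟨w, hws⟩ : s) ∈ q.support := by
  obtain ⟨x, hx, rfl⟩ := List.mem_map.1 (Walk.support_map _ q ▸ hw)
  exact ⟨x.2, hx⟩

theorem IsHubLabeling.restrict (hH : IsHubLabeling G H) (hs : (G.induce s).Preconnected) :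
    IsHubLabeling (G.induce s) (fun u : s => {v : s | (v : V) ∈ H u}) := by
  classical
  intro u v
  obtain ⟨w, hwu, hwv, hw⟩ := hH u v
  have isPath_map {q : (G.induce s).Walk u v} (hq : q.IsPath) :
      (q.map (Embedding.induce s).toHom).IsPath :=
    hq.map Subtype.coe_injective
  obtain ⟨q⟩ := hs u v
  obtain ⟨hws, -⟩ := q.toPath.val.mem_support_map_induce (hw _ (isPath_map q.toPath.prop))
  exact ⟨⟨w, hws⟩, hwu, hwv, fun r hr => (r.mem_support_map_induce (hw _ (isPath_map hr))).2⟩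

end Restriction

lemma OPTpPow_le {V : Type*} {G : SimpleGraph V} {H : V → Set V} (hH : IsHubLabeling G H)
    (p : ℝ) : OPTpPow G p ≤ ∑ᶠ u, (Nat.card (H u) : ℝ) ^ p := by
  refine csInf_le ⟨0, ?_⟩ ⟨H, hH, rfl⟩
  rintro _ ⟨H', -, rfl⟩
  exact finsum_nonneg fun u => Real.rpow_nonneg (Nat.cast_nonneg _) p

lemma Nat.card_preimage_val_le {V : Type*} {s A : Set V} (hA : A.Finite) :
    Nat.card {v : s | (v : V) ∈ A} ≤ Nat.card A :=
  have := hA.to_subtype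
  Nat.card_le_card_of_injective (fun x => (⟨x.1, x.2⟩ : A)) fun _ _ h => by
    ext; simpa using h

lemma OPTpPow_induce_le {V : Type*} [Finite V] {G : SimpleGraph V} {s : Set V}
    (hs : (G.induce s).Preconnected) {H : V → Set V} (hH : IsHubLabeling G H) {p : ℝ}
    (hp : 0 ≤ p) : OPTpPow (G.induce s) p ≤ ∑ᶠ u : s, (Nat.card (H u) : ℝ) ^ p := by
  refine (OPTpPow_le (hH.restrict hs) p).trans <|
    finsum_le_finsum' (Set.toFinite _) (Set.toFinite _) fun u => ?_
  exact Real.rpow_le_rpow (Nat.cast_nonneg _)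
    (Nat.cast_le.2 (Nat.card_preimage_val_le (Set.toFinite _))) hp

lemma sum_finsum_subtype_of_partition {V M : Type*} [Finite V] [AddCommMonoid M] {j : ℕ}
    {S : Fin j → Set V} (hdisj : Pairwise (Disjoint on S)) (hcover : (⋃ i, S i) = Set.univ)
    (f : V → M) : ∑ i, ∑ᶠ u : S i, f u = ∑ᶠ u, f u := by
  simp only [finsum_set_coe_eq_finsum_mem]
  rw [← finsum_eq_sum_of_fintype, ← finsum_mem_iUnion hdisj fun _ => Set.toFinite _, hcover,
    finsum_mem_univ]

theorem restriction_feasible_and_superadditive_general {V : Type*} [Fintype V]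
    (G : SimpleGraph V) (j : ℕ) (S : Fin j → Set V)
    (hdisj : ∀ i i' : Fin j, i ≠ i' → Disjoint (S i) (S i'))
    (hcover : (⋃ i, S i) = Set.univ)
    (hconn : ∀ i, (G.induce (S i)).Connected)
    (H : V → Set V) (hH : IsHubLabeling G H) (p : ℝ) (hp : 1 ≤ p) :
    (∀ i, IsHubLabeling (G.induce (S i))
        (fun u : ↥(S i) => {v : ↥(S i) | (v : V) ∈ H (u : V)})) ∧
    ∑ i, OPTpPow (G.induce (S i)) p ≤ OPTpPow G p := by
  refine ⟨fun i => hH.restrict (hconn i).preconnected, le_csInf ⟨_, H, hH, rfl⟩ ?_⟩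
  rintro _ ⟨H', hH', rfl⟩
  calc ∑ i, OPTpPow (G.induce (S i)) p
      ≤ ∑ i, ∑ᶠ u : S i, (Nat.card (H' u) : ℝ) ^ p := Finset.sum_le_sum fun i _ =>
        OPTpPow_induce_le (hconn i).preconnected hH' (zero_le_one.trans hp)
    _ = ∑ᶠ u, (Nat.card (H' u) : ℝ) ^ p := sum_finsum_subtype_of_partition hdisj hcover
        fun u => (Nat.card (H' u) : ℝ) ^ p

/-- Restrictions of a hub labeling to vertex-disjoint subtrees partitioning a tree are
feasible, and hence `∑ᵢ OPT_p(Tᵢ)^p ≤ OPT_p(T)^p` for every `p ≥ 1`. -/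
theorem restriction_feasible_and_superadditive {V : Type*} [Fintype V]
    (G : SimpleGraph V) (hG : G.IsTree) (j : ℕ) (S : Fin j → Set V)
    (hdisj : ∀ i i' : Fin j, i ≠ i' → Disjoint (S i) (S i'))
    (hcover : (⋃ i, S i) = Set.univ)
    (hconn : ∀ i, (G.induce (S i)).Connected)
    (H : V → Set V) (hH : IsHubLabeling G H) (p : ℝ) (hp : 1 ≤ p) :
    (∀ i, IsHubLabeling (G.induce (S i))
        (fun u : ↥(S i) => {v : ↥(S i) | (v : V) ∈ H (u : V)})) ∧
    ∑ i, OPTpPow (G.induce (S i)) p ≤ OPTpPow G p :=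
  restriction_feasible_and_superadditive_general G j S hdisj hcover hconn H hH p hp
end

section
/- The optimal shifted ℓ_p^p hub-labeling cost on trees satisfies the separator recurrence: for every tree T', integer shift t ≥ 0 and real p ≥ 1, OPT[T',t]^p = (1+t)^p + min over vertices r of T' of Σ over components T'' of T' − r of OPT[T'', t+1]^p, where OPT[T',t]^p = min over hierarchical hub labelings H of T' of Σ_{u∈T'} (|H_u| + t)^p. -/
/-- `H` is hierarchical: there is a partial order `⪯` on `V` with `v ∈ H u → v ⪯ u`. -/
def IsHierarchical {V : Type*} (H : V → Set V) : Prop :=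
  ∃ r : V → V → Prop, IsPartialOrder V r ∧ ∀ u v : V, v ∈ H u → r v u

/-- `OPT[G, t]^p`: the minimum over hierarchical hub labelings `H` of `G` of
`∑_u (|H_u| + t)^p`. -/
noncomputable def OPTsh {V : Type*} (G : SimpleGraph V) (t : ℕ) (p : ℝ) : ℝ :=
  sInf {c : ℝ | ∃ H : V → Set V, IsHubLabeling G H ∧ IsHierarchical H ∧
    c = ∑ᶠ u : V, ((Nat.card (H u) : ℝ) + (t : ℝ)) ^ p}

/-!
Let `H` be an optimal hierarchical hub labeling of the tree. The minimum `r` of its hierarchy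
order lies in every hub set, since the hub of a pair `(u, r)` lies below `r`. Restricting `H` to a
component of `T - r` gives a hierarchical hub labeling of that component whose hub sets have lost
at least the vertex `r`, so the cost of `H` is at least `(1 + t)^p` plus the `(t + 1)`-shifted
costs of the components. Conversely, optimal labelings of the components of `T - r`, with `r`
added to every hub set, form a hierarchical hub labeling of `T` of exactly that cost: `r`
separates vertices of different components, and within a component the unique tree path stays in
the component.
-/

open SimpleGraph Function

noncomputable def hubCost {V : Type*} (H : V → Set V) (t : ℕ) (p : ℝ) : ℝ :=
  ∑ᶠ u : V, ((Nat.card (H u) : ℝ) + t) ^ p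

lemma isHierarchical_iff {V : Type*} {H : V → Set V} :
    IsHierarchical H ↔ ∃ _ : PartialOrder V, ∀ u v, v ∈ H u → v ≤ u := by
  constructor
  · rintro ⟨R, hR, hRH⟩
    exact ⟨{ le := R
             le_refl := refl_of R
             le_trans := fun _ _ _ => trans_of R
             le_antisymm := fun _ _ => antisymm_of R }, hRH⟩
  · rintro ⟨_, h⟩
    exact ⟨(· ≤ ·), inferInstance, h⟩

lemma IsHierarchical.comap {V W : Type*} {H : V → Set V} (hH : IsHierarchical H) {f : W → V}
    (hf : Injective f) : IsHierarchical fun x => f ⁻¹' H (f x) := by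
  obtain ⟨_, h⟩ := isHierarchical_iff.1 hH
  exact isHierarchical_iff.2 ⟨PartialOrder.lift f hf, fun _ _ hy => h _ _ hy⟩

lemma Nat.card_preimage_add_one_le {α β : Type*} [Finite β] {f : α → β} (hf : Injective f)
    {s : Set β} {b : β} (hb : b ∈ s) (hbf : b ∉ Set.range f) :
    Nat.card (f ⁻¹' s) + 1 ≤ Nat.card s := by
  rw [Nat.card_coe_set_eq, Nat.card_coe_set_eq, ← Set.ncard_image_of_injective _ hf,
    ← Set.ncard_sdiff_singleton_add_one hb]
  refine Nat.add_le_add_right (Set.ncard_le_ncard ?_) 1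
  rintro _ ⟨x, hx, rfl⟩
  exact ⟨hx, fun h => hbf ⟨x, h⟩⟩

section OPTsh

variable {V : Type*} [Finite V]

lemma exists_isHubLabeling_isHierarchical (G : SimpleGraph V) :
    ∃ H : V → Set V, IsHubLabeling G H ∧ IsHierarchical H := by
  obtain ⟨n, ⟨e⟩⟩ := Finite.exists_equiv_fin V
  let : LinearOrder V := LinearOrder.lift' e e.injective
  refine ⟨fun u => {w | w ≤ u}, fun u v => ?_, isHierarchical_iff.2 ⟨_, fun _ _ h => h⟩⟩
  rcases le_total u v with h | h
  · exact ⟨u, le_refl u, h, fun q _ => q.start_mem_support⟩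
  · exact ⟨v, h, le_refl v, fun q _ => q.end_mem_support⟩

lemma finite_hubCosts (G : SimpleGraph V) (t : ℕ) (p : ℝ) :
    {c | ∃ H, IsHubLabeling G H ∧ IsHierarchical H ∧ c = hubCost H t p}.Finite :=
  (Set.finite_range fun H : V → Set V => hubCost H t p).subset <| by
    rintro _ ⟨H, -, -, rfl⟩
    exact ⟨H, rfl⟩

lemma exists_hubCost_eq_OPTsh (G : SimpleGraph V) (t : ℕ) (p : ℝ) :
    ∃ H, IsHubLabeling G H ∧ IsHierarchical H ∧ hubCost H t p = OPTsh G t p := by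
  obtain ⟨H, hH, hH'⟩ := exists_isHubLabeling_isHierarchical G
  obtain ⟨H, hH, hH', h⟩ :=
    Set.Nonempty.csInf_mem
      (s := {c | ∃ H, IsHubLabeling G H ∧ IsHierarchical H ∧ c = hubCost H t p})
      ⟨_, H, hH, hH', rfl⟩ (finite_hubCosts G t p)
  exact ⟨H, hH, hH', h.symm⟩

lemma OPTsh_le_hubCost {G : SimpleGraph V} {t : ℕ} {p : ℝ} {H : V → Set V}
    (hH : IsHubLabeling G H) (hH' : IsHierarchical H) : OPTsh G t p ≤ hubCost H t p :=
  csInf_le (finite_hubCosts G t p).bddBelow ⟨H, hH, hH', rfl⟩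

end OPTsh

namespace SimpleGraph

variable {V : Type*}

lemma finsum_connectedComponent_finsum_supp {M : Type*} [Finite V] [AddCommMonoid M]
    (G : SimpleGraph V) (g : V → M) :
    ∑ᶠ C : G.ConnectedComponent, ∑ᶠ x : C.supp, g x = ∑ᶠ u, g u := by
  classical
  have := Fintype.ofFinite V
  simp only [finsum_eq_sum_of_fintype]
  rw [← Finset.sum_fiberwise Finset.univ G.connectedComponentMk g]
  exact Fintype.sum_congr _ _ fun C => (Finset.sum_subtype _ (by simp) g).symm

lemma finsum_eq_add_finsum_connectedComponent {M : Type*} [Finite V] [AddCommMonoid M]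
    (G : SimpleGraph V) (r : V) (g : V → M) :
    ∑ᶠ u, g u =
      g r + ∑ᶠ C : (G.induce {v | v ≠ r}).ConnectedComponent, ∑ᶠ x : C.supp, g x := by
  classical
  have := Fintype.ofFinite V
  rw [finsum_connectedComponent_finsum_supp _ fun x : {v | v ≠ r} => g x,
    finsum_eq_sum_of_fintype, finsum_eq_sum_of_fintype]
  exact Fintype.sum_eq_add_sum_subtype_ne g r

variable {G : SimpleGraph V}

lemma ConnectedComponent.preconnected_induce_supp (C : G.ConnectedComponent) :
    (G.induce C.supp).Preconnected :=
  C.maximal_connected_induce_supp.1.preconnected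

def componentEmbedding (s : Set V) (C : (G.induce s).ConnectedComponent) :
    (G.induce s).induce C.supp ↪g G :=
  (Embedding.induce s).comp (Embedding.induce C.supp)

@[simp]
lemma componentEmbedding_apply (s : Set V) (C : (G.induce s).ConnectedComponent) (x : C.supp) :
    componentEmbedding s C x = x.1.1 :=
  rfl

lemma injective_sigma_componentEmbedding (s : Set V) :
    Injective fun a : (Σ C : (G.induce s).ConnectedComponent, C.supp) =>
      componentEmbedding s a.1 a.2 := by
  rintro ⟨C, x, hx⟩ ⟨D, y, hy⟩ h
  obtain rfl : x = y := Subtype.ext h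
  obtain rfl : C = D := hx.symm.trans hy
  rfl

end SimpleGraph

namespace IsHubLabeling

variable {V W : Type*} {G : SimpleGraph V} {G' : SimpleGraph W} {H : V → Set V}

lemma comap (hH : IsHubLabeling G H) (f : G' ↪g G) (hG' : G'.Preconnected) :
    IsHubLabeling G' fun x => f ⁻¹' H (f x) := by
  intro x y
  obtain ⟨w, hwx, hwy, hw⟩ := hH (f x) (f y)
  have hpath (q : G'.Walk x y) (hq : q.IsPath) : w ∈ (q.map f.toHom).support :=
    hw _ (hq.map f.injective)
  obtain ⟨q, hq⟩ := hG'.exists_isPath x y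
  obtain ⟨z, -, rfl⟩ := List.mem_map.1 (Walk.support_map f.toHom q ▸ hpath q hq)
  refine ⟨z, hwx, hwy, fun q hq => ?_⟩
  simpa [Walk.support_map, f.injective.eq_iff] using hpath q hq

lemma exists_hub_map (hG : G.IsAcyclic) (f : G' ↪g G) (hG' : G'.Preconnected)
    {H' : W → Set W} (hH' : IsHubLabeling G' H') (hsub : ∀ x, f '' H' x ⊆ H (f x)) (x y : W) :
    ∃ w, w ∈ H (f x) ∧ w ∈ H (f y) ∧
      ∀ q : G.Walk (f x) (f y), q.IsPath → w ∈ q.support := by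
  obtain ⟨w, hwx, hwy, hw⟩ := hH' x y
  obtain ⟨q', hq'⟩ := hG'.exists_isPath x y
  refine ⟨f w, hsub x ⟨w, hwx, rfl⟩, hsub y ⟨w, hwy, rfl⟩, fun q hq => ?_⟩
  have : q = q'.map f.toHom :=
    congrArg Subtype.val ((hG.subsingleton_path _ _).elim ⟨q, hq⟩ ⟨_, hq'.map f.injective⟩)
  rw [this, Walk.support_map]
  exact List.mem_map_of_mem (hw q' hq')

lemma exists_forall_mem [Finite V] [Nonempty V] (hH : IsHubLabeling G H)
    (hH' : IsHierarchical H) : ∃ r, ∀ u, r ∈ H u := by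
  obtain ⟨_, hle⟩ := isHierarchical_iff.1 hH'
  obtain ⟨r, -, hr⟩ :=
    exists_minimal_of_wellFoundedLT (fun _ : V => True) ⟨Classical.arbitrary V, trivial⟩
  refine ⟨r, fun u => ?_⟩
  obtain ⟨w, hwu, hwr, -⟩ := hH u r
  obtain rfl : w = r := le_antisymm (hle r w hwr) (hr trivial (hle r w hwr))
  exact hwu

end IsHubLabeling

section apexGlue

variable {V I : Type*} {W : I → Type*}

def apexGlue (r : V) (ι : ∀ i, W i → V) (H : ∀ i, W i → Set (W i)) (u : V) : Set V :=
  insert r {v | ∃ i x y, ι i x = u ∧ ι i y = v ∧ y ∈ H i x}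

variable {r : V} {ι : ∀ i, W i → V}

lemma apexGlue_apply (hι : Injective fun a : (Σ i, W i) => ι a.1 a.2)
    (H : ∀ i, W i → Set (W i)) (i : I) (x : W i) :
    apexGlue r ι H (ι i x) = insert r (ι i '' H i x) := by
  ext v
  simp only [apexGlue, Set.mem_insert_iff, Set.mem_ofPred_eq, Set.mem_image]
  refine or_congr_right ⟨?_, fun ⟨y, hy, hv⟩ => ⟨i, x, y, rfl, hv, hy⟩⟩
  rintro ⟨j, x', y, hx, rfl, hy⟩
  obtain ⟨rfl, hx⟩ := Sigma.mk.inj_iff.1 (@hι ⟨j, x'⟩ ⟨i, x⟩ hx)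
  exact ⟨y, eq_of_heq hx ▸ hy, rfl⟩

lemma apexGlue_apex (hr : ∀ i x, ι i x ≠ r) (H : ∀ i, W i → Set (W i)) :
    apexGlue r ι H r = {r} := by
  ext v
  simp only [apexGlue, Set.mem_insert_iff, Set.mem_ofPred_eq, Set.mem_singleton_iff,
    or_iff_left_iff_imp]
  rintro ⟨i, x, y, hx, -, -⟩
  exact absurd hx (hr i x)

lemma card_apexGlue_apply (hι : Injective fun a : (Σ i, W i) => ι a.1 a.2)
    (hr : ∀ i x, ι i x ≠ r) (H : ∀ i, W i → Set (W i)) (i : I) (x : W i) [Finite (W i)] :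
    Nat.card (apexGlue r ι H (ι i x)) = Nat.card (H i x) + 1 := by
  have hιi : Injective (ι i) := fun x y h =>
    eq_of_heq (Sigma.mk.inj_iff.1 (@hι ⟨i, x⟩ ⟨i, y⟩ h)).2
  rw [apexGlue_apply hι, Nat.card_coe_set_eq, Set.ncard_insert_of_notMem,
    Set.ncard_image_of_injective _ hιi, Nat.card_coe_set_eq]
  rintro ⟨y, -, hy⟩
  exact hr i y hy

lemma isHierarchical_apexGlue (hι : Injective fun a : (Σ i, W i) => ι a.1 a.2)
    (hr : ∀ i x, ι i x ≠ r) {H : ∀ i, W i → Set (W i)} (hH : ∀ i, IsHierarchical (H i)) :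
    IsHierarchical (apexGlue r ι H) := by
  choose R hR hRH using hH
  have cancel {i j x y} (h : ι i x = ι j y) : (⟨i, x⟩ : Σ i, W i) = ⟨j, y⟩ := hι h
  refine ⟨fun v u => v = u ∨ v = r ∨ ∃ i x y, ι i x = u ∧ ι i y = v ∧ R i y x,
    { refl := fun _ => .inl rfl, trans := ?_, antisymm := ?_ }, ?_⟩
  · rintro a b c (rfl | rfl | ⟨i, x, y, rfl, rfl, hyx⟩) hbc
    · exact hbc
    · exact .inr (.inl rfl)
    rcases hbc with rfl | hb | ⟨j, x', y', rfl, hy', hxy'⟩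
    · exact .inr (.inr ⟨i, x, y, rfl, rfl, hyx⟩)
    · exact absurd hb (hr i x)
    · obtain ⟨rfl, hx⟩ := Sigma.mk.inj_iff.1 (cancel hy')
      cases hx
      have := hR j
      exact .inr (.inr ⟨j, x', y, rfl, rfl, trans_of (R j) hyx hxy'⟩)
  · rintro a b (rfl | rfl | ⟨i, x, y, rfl, rfl, hyx⟩) hba
    · rfl
    · rcases hba with h | h | ⟨j, x', -, hx', -, -⟩
      · exact h.symm
      · exact h.symm
      · exact absurd hx' (hr j x')
    rcases hba with h | h | ⟨j, x', y', hx', hy', hxy⟩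
    · exact h.symm
    · exact absurd h (hr i x)
    · obtain ⟨rfl, hx⟩ := Sigma.mk.inj_iff.1 (cancel hx')
      obtain ⟨-, hy⟩ := Sigma.mk.inj_iff.1 (cancel hy')
      cases hx
      cases hy
      have := hR j
      rw [antisymm_of (R j) hyx hxy]
  · rintro u v (rfl | ⟨i, x, y, rfl, rfl, hy⟩)
    · exact .inr (.inl rfl)
    · exact .inr (.inr ⟨i, x, y, rfl, rfl, hRH i x y hy⟩)

end apexGlue

lemma isHubLabeling_apexGlue_componentEmbedding {V : Type*} {G : SimpleGraph V}
    (hG : G.IsAcyclic) (r : V)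
    {H : ∀ C : (G.induce {v | v ≠ r}).ConnectedComponent, C.supp → Set C.supp}
    (hH : ∀ C, IsHubLabeling ((G.induce {v | v ≠ r}).induce C.supp) (H C)) :
    IsHubLabeling G (apexGlue r (fun C => componentEmbedding {v | v ≠ r} C) H) := by
  have hrK (u : V) : r ∈ apexGlue r (fun C => componentEmbedding {v | v ≠ r} C) H u :=
    Set.mem_insert r _
  intro u v
  by_cases hu : u = r
  · subst hu
    exact ⟨u, hrK u, hrK v, fun q _ => q.start_mem_support⟩
  by_cases hv : v = r
  · subst hv
    exact ⟨v, hrK u, hrK v, fun q _ => q.end_mem_support⟩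
  by_cases hC : (G.induce {v | v ≠ r}).connectedComponentMk ⟨u, hu⟩ =
      (G.induce {v | v ≠ r}).connectedComponentMk ⟨v, hv⟩
  · set C := (G.induce {v | v ≠ r}).connectedComponentMk ⟨u, hu⟩
    refine IsHubLabeling.exists_hub_map hG (componentEmbedding _ C) C.preconnected_induce_supp
      (hH C) (fun x => ?_) ⟨⟨u, hu⟩, rfl⟩ ⟨⟨v, hv⟩, hC.symm⟩
    rw [apexGlue_apply (injective_sigma_componentEmbedding _)]
    exact Set.subset_insert _ _
  · refine ⟨r, hrK u, hrK v, fun q _ => by_contra fun hrq => hC ?_⟩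
    exact ConnectedComponent.sound ⟨q.induce _ fun x hx => ne_of_mem_of_not_mem hx hrq⟩

section Recurrence

variable {V : Type*} [Finite V]

lemma OPTsh_le_add_finsum {G : SimpleGraph V} (hG : G.IsAcyclic) (t : ℕ) (p : ℝ) (r : V) :
    OPTsh G t p ≤ (1 + (t : ℝ)) ^ p + ∑ᶠ C : (G.induce {v | v ≠ r}).ConnectedComponent,
      OPTsh ((G.induce {v | v ≠ r}).induce C.supp) (t + 1) p := by
  choose H hH hHier hcost using fun C : (G.induce {v | v ≠ r}).ConnectedComponent =>
    exists_hubCost_eq_OPTsh ((G.induce {v | v ≠ r}).induce C.supp) (t + 1) p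
  have hι := injective_sigma_componentEmbedding (G := G) {v | v ≠ r}
  have hr (C : (G.induce {v | v ≠ r}).ConnectedComponent) (x : C.supp) :
      componentEmbedding {v | v ≠ r} C x ≠ r :=
    x.1.2
  calc OPTsh G t p ≤ hubCost (apexGlue r (fun C => componentEmbedding _ C) H) t p :=
        OPTsh_le_hubCost (isHubLabeling_apexGlue_componentEmbedding hG r hH)
          (isHierarchical_apexGlue hι hr hHier)
    _ = (1 + (t : ℝ)) ^ p + ∑ᶠ C, hubCost (H C) (t + 1) p := by
        rw [hubCost, finsum_eq_add_finsum_connectedComponent G r, apexGlue_apex hr]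
        congr 1
        · simp
        refine finsum_congr fun C => finsum_congr fun x => ?_
        have hcard := card_apexGlue_apply hι hr H C x
        rw [componentEmbedding_apply] at hcard
        rw [hcard]
        push_cast
        ring_nf
    _ = _ := by simp_rw [hcost]

lemma exists_add_finsum_le_OPTsh [Nonempty V] (G : SimpleGraph V) (t : ℕ) {p : ℝ}
    (hp : 0 ≤ p) :
    ∃ r, (1 + (t : ℝ)) ^ p + ∑ᶠ C : (G.induce {v | v ≠ r}).ConnectedComponent,
      OPTsh ((G.induce {v | v ≠ r}).induce C.supp) (t + 1) p ≤ OPTsh G t p := by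
  obtain ⟨H, hH, hHier, hcost⟩ := exists_hubCost_eq_OPTsh G t p
  obtain ⟨r, hr⟩ := hH.exists_forall_mem hHier
  refine ⟨r, ?_⟩
  rw [← hcost, hubCost, finsum_eq_add_finsum_connectedComponent G r]
  refine add_le_add ?_ (finsum_le_finsum' (Set.toFinite _) (Set.toFinite _) fun C => ?_)
  · have : Nonempty (H r) := ⟨⟨r, hr r⟩⟩
    gcongr
    exact_mod_cast Nat.card_pos (α := H r)
  set f := componentEmbedding {v | v ≠ r} C
  calc OPTsh _ (t + 1) p ≤ hubCost (fun x => f ⁻¹' H (f x)) (t + 1) p :=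
        OPTsh_le_hubCost (hH.comap f C.preconnected_induce_supp) (hHier.comap f.injective)
    _ ≤ _ := finsum_le_finsum' (Set.toFinite _) (Set.toFinite _) fun x => ?_
  have hcard : (Nat.card (f ⁻¹' H (f x)) : ℝ) + 1 ≤ Nat.card (H x.1.1) := by
    exact_mod_cast Nat.card_preimage_add_one_le f.injective (hr (f x)) fun ⟨y, hy⟩ => y.1.2 hy
  refine Real.rpow_le_rpow (by positivity) ?_ hp
  push_cast
  linarith

end Recurrence

/-- The optimal shifted `ℓ_p^p` hub-labeling cost on trees satisfies the separator
recurrence: `OPT[T', t]^p = (1+t)^p + min_r ∑_{T'' c.c. of T' - r} OPT[T'', t+1]^p`. -/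
theorem opt_shifted_recurrence {V : Type*} [Fintype V] [Nonempty V]
    (G : SimpleGraph V) (hG : G.IsTree) (t : ℕ) (p : ℝ) (hp : 1 ≤ p) :
    OPTsh G t p = (1 + (t : ℝ)) ^ p +
      sInf {s : ℝ | ∃ r : V,
        s = ∑ᶠ C : (G.induce {v : V | v ≠ r}).ConnectedComponent,
          OPTsh ((G.induce {v : V | v ≠ r}).induce C.supp) (t + 1) p} := by
  set f : V → ℝ := fun r => ∑ᶠ C : (G.induce {v : V | v ≠ r}).ConnectedComponent,
    OPTsh ((G.induce {v : V | v ≠ r}).induce C.supp) (t + 1) p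
  have hrange : {s | ∃ r, s = f r} = Set.range f := by simp only [Set.range, eq_comm]
  rw [hrange]
  obtain ⟨r₀, hr₀⟩ := (Set.range_nonempty f).csInf_mem (Set.finite_range f)
  obtain ⟨r₁, hr₁⟩ := exists_add_finsum_le_OPTsh G t (zero_le_one.trans hp)
  refine le_antisymm ?_ ?_
  · rw [← hr₀]
    exact OPTsh_le_add_finsum hG.isAcyclic t p r₀
  · exact (add_le_add_right (csInf_le (Set.finite_range f).bddBelow ⟨r₁, rfl⟩) _).trans hr₁
end

section
/- If P(h,t) satisfies P(0,t) = Path(t+1), P(1,t) = 5 + t + Path(t), and P(h,t) = (2^{h+1} − 1) + t + 2·P(h−2,0) + P(h−1,t+1) for h ≥ 2, then P(h,t) ≤ (4/3)·h·2^h + g(h)·h·2^h + f(h+t) + h·t for all h,t ≥ 0, where f(n) = Path(n+1) + 5, g(h) = C/√h for a suitable absolute constant C (with g(0) interpreted so the base cases hold), and Path(t) = (t+1)⌈log₂(t+1)⌉ − 2^{⌈log₂(t+1)⌉} + 1. In particular P(h,0) = (1 + o(1))·(4/3)·h·2^h as h → ∞. -/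
/-!
Write `M h = (4/3)·h·2^h`. The recurrence reproduces `M` exactly,
`2^(h+3) + 2·M h + M (h+1) = M (h+2)`, and `2^h` solves its homogeneous part
`x (h+2) = 2·x h + x (h+1)`. So a two-step induction on `h` (for all `t` at once) gives
`M h - 2^h + 1 ≤ P h t ≤ M h + 10·2^h - q h + Path (h+t+1) + 5 + h·t` with
`q h = h² + 6h + 15`: the term `h·t` absorbs the `t` terms, `Path (h+t+1)` is carried along
unchanged, and `q` is chosen so that `2·q h + q (h+1) - q (h+2)` dominates the extra cost
`2·Path (h+1) + h + 10 ≤ 2·(h+2)² + h + 12` of the step from `h` to `h+2`.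
Since `10·2^h ≤ (10/√h)·h·2^h`, this is the bound with `C = 10`, and
`|P h 0 - M h| ≤ 10·2^h = o(M h)` gives the asymptotics.
-/

open Filter Asymptotics Nat

def pathCost (t : ℕ) : ℕ := (t + 1) * clog 2 (t + 1) - 2 ^ clog 2 (t + 1) + 1

theorem mul_clog_sub_pow_clog_le_succ (n : ℕ) :
    n * clog 2 n - 2 ^ clog 2 n ≤ (n + 1) * clog 2 (n + 1) - 2 ^ clog 2 (n + 1) := by
  obtain hL | hL := (clog_monotone 2 n.le_succ).eq_or_lt
  · rw [← hL]
    gcongr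
    exact n.le_succ
  · have hn : 2 ^ clog 2 n = n := (clog_lt_clog_succ_iff one_lt_two).1 hL
    have hn0 : 0 < n := hn ▸ Nat.two_pow_pos _
    have hL' : clog 2 (n + 1) = clog 2 n + 1 :=
      le_antisymm (clog_le_of_le_pow (by rw [pow_succ, hn]; omega)) hL
    rw [hL', pow_succ, hn, Nat.add_one_mul, Nat.mul_add_one]
    omega

theorem pathCost_monotone : Monotone pathCost :=
  monotone_nat_of_le_succ fun _ => Nat.add_le_add_right (mul_clog_sub_pow_clog_le_succ _) 1

theorem pathCost_le (t : ℕ) : pathCost t ≤ (t + 1) ^ 2 + 1 := by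
  have hclog : clog 2 (t + 1) ≤ t + 1 := clog_le_of_le_pow Nat.lt_two_pow_self.le
  calc pathCost t ≤ (t + 1) * clog 2 (t + 1) + 1 := Nat.add_le_add_right (Nat.sub_le _ _) 1
    _ ≤ (t + 1) ^ 2 + 1 := by rw [sq]; gcongr

theorem le_div_sqrt_mul_self {C : ℝ} (hC : 0 ≤ C) {n : ℕ} (hn : n ≠ 0) : C ≤ C / √n * n := by
  have h1 : (1 : ℝ) ≤ √n := Real.one_le_sqrt.2 (by exact_mod_cast Nat.one_le_iff_ne_zero.2 hn)
  rw [div_mul_eq_mul_div, mul_div_assoc, Real.div_sqrt]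
  exact le_mul_of_one_le_right hC h1

theorem tendsto_div_of_abs_sub_le {a : ℕ → ℝ} (K : ℝ)
    (ha : ∀ n, |a n - 4 / 3 * n * 2 ^ n| ≤ K * 2 ^ n) :
    Tendsto (fun n : ℕ => a n / (4 / 3 * n * 2 ^ n)) atTop (nhds 1) := by
  have hne : ∀ᶠ n : ℕ in atTop, (4 / 3 * n * 2 ^ n : ℝ) ≠ 0 := by
    filter_upwards [eventually_ne_atTop 0] with n hn
    positivity
  refine (isEquivalent_iff_tendsto_one hne).1 ?_
  have hbig : (fun n : ℕ => a n - 4 / 3 * n * 2 ^ n) =O[atTop] fun n : ℕ => (1 : ℝ) * 2 ^ n :=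
    IsBigO.of_bound K (.of_forall fun n => by simpa using ha n)
  have hlittle : (fun n : ℕ => (1 : ℝ) * 2 ^ n) =o[atTop] fun n : ℕ => 4 / 3 * (n : ℝ) * 2 ^ n :=
    (isLittleO_one_left_iff ℝ |>.2 <| tendsto_norm_atTop_atTop.comp <|
      tendsto_natCast_atTop_atTop.const_mul_atTop (by norm_num)).mul_isBigO (isBigO_refl _ _)
  exact hbig.trans_isLittleO hlittle

section Recurrence

variable {Path : ℕ → ℕ} {P : ℕ → ℕ → ℕ}

theorem recurrence_cast_add_two
    (hPrec : ∀ h t, 2 ≤ h → P h t = (2 ^ (h + 1) - 1) + t + 2 * P (h - 2) 0 + P (h - 1) (t + 1))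
    (n t : ℕ) : (P (n + 2) t : ℝ) = 8 * 2 ^ n - 1 + t + 2 * P n 0 + P (n + 1) (t + 1) := by
  rw [hPrec (n + 2) t le_add_self, Nat.add_sub_cancel, show n + 2 - 1 = n + 1 by omega]
  push_cast [Nat.one_le_two_pow]
  ring

theorem recurrence_lower_bound (hP1 : ∀ t, P 1 t = 5 + t + Path t)
    (hPrec : ∀ h t, 2 ≤ h → P h t = (2 ^ (h + 1) - 1) + t + 2 * P (h - 2) 0 + P (h - 1) (t + 1))
    (h t : ℕ) : 4 / 3 * h * 2 ^ h - 2 ^ h + 1 ≤ (P h t : ℝ) := by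
  induction h using Nat.twoStepInduction generalizing t with
  | zero => simp
  | one =>
    rw [hP1]
    push_cast
    linarith [t.cast_nonneg (α := ℝ), (Path t).cast_nonneg (α := ℝ)]
  | more n ih0 ih1 =>
    rw [recurrence_cast_add_two hPrec]
    have h0 := ih0 0
    have h1 := ih1 (t + 1)
    push_cast at h0 h1 ⊢
    rw [pow_succ] at h1
    rw [pow_succ, pow_succ]
    linarith [t.cast_nonneg (α := ℝ)]

theorem recurrence_upper_bound (hmono : Monotone Path) (hPath_le : ∀ t, Path t ≤ (t + 1) ^ 2 + 1)
    (hP0 : ∀ t, P 0 t = Path (t + 1))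
    (hP1 : ∀ t, P 1 t = 5 + t + Path t)
    (hPrec : ∀ h t, 2 ≤ h → P h t = (2 ^ (h + 1) - 1) + t + 2 * P (h - 2) 0 + P (h - 1) (t + 1))
    (h t : ℕ) :
    (P h t : ℝ) ≤ 4 / 3 * h * 2 ^ h + 10 * 2 ^ h - (h ^ 2 + 6 * h + 15)
      + (Path (h + t + 1) + 5) + h * t := by
  induction h using Nat.twoStepInduction generalizing t with
  | zero =>
    rw [hP0, zero_add]
    push_cast
    linarith
  | one =>
    have : (Path t : ℝ) ≤ Path (1 + t + 1) := by exact_mod_cast hmono (by omega)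
    rw [hP1]
    push_cast
    linarith
  | more n ih0 ih1 =>
    rw [recurrence_cast_add_two hPrec]
    have h0 := ih0 0
    have h1 := ih1 (t + 1)
    have hp : (Path (n + 1) : ℝ) ≤ (n + 2) ^ 2 + 1 := by exact_mod_cast hPath_le (n + 1)
    rw [show n + 1 + (t + 1) + 1 = n + 2 + t + 1 by ring] at h1
    push_cast at h0 h1 ⊢
    rw [pow_succ] at h1
    rw [pow_succ, pow_succ]
    linarith [t.cast_nonneg (α := ℝ)]

end Recurrence

/-- If `P` satisfies `P(0,t) = Path(t+1)`, `P(1,t) = 5 + t + Path(t)` and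
`P(h,t) = (2^(h+1) - 1) + t + 2·P(h-2,0) + P(h-1,t+1)` for `h ≥ 2`, where
`Path(t) = (t+1)·⌈log₂(t+1)⌉ - 2^⌈log₂(t+1)⌉ + 1`, then for a suitable absolute
constant `C > 0` we have
`P(h,t) ≤ (4/3)·h·2^h + (C/√h)·h·2^h + f(h+t) + h·t` for all `h, t ≥ 0`,
where `f(n) = Path(n+1) + 5`; in particular `P(h,0) = (1 + o(1))·(4/3)·h·2^h`. -/
theorem binary_tree_upper_bound (Path : ℕ → ℕ)
    (hPath : ∀ t, Path t = (t + 1) * Nat.clog 2 (t + 1) - 2 ^ Nat.clog 2 (t + 1) + 1)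
    (P : ℕ → ℕ → ℕ)
    (hP0 : ∀ t, P 0 t = Path (t + 1))
    (hP1 : ∀ t, P 1 t = 5 + t + Path t)
    (hPrec : ∀ h t, 2 ≤ h → P h t = (2 ^ (h + 1) - 1) + t + 2 * P (h - 2) 0 + P (h - 1) (t + 1)) :
    (∃ C : ℝ, 0 < C ∧ ∀ h t : ℕ,
      (P h t : ℝ) ≤ (4 / 3) * h * 2 ^ h + (C / Real.sqrt h) * h * 2 ^ h
        + ((Path (h + t + 1) : ℝ) + 5) + h * t) ∧
    Tendsto (fun h : ℕ => (P h 0 : ℝ) / ((4 / 3) * h * 2 ^ h)) atTop (nhds 1) := by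
  obtain rfl : Path = pathCost := funext hPath
  have hupper := recurrence_upper_bound pathCost_monotone pathCost_le hP0 hP1 hPrec
  refine ⟨⟨10, by norm_num, fun h t => ?_⟩, tendsto_div_of_abs_sub_le 10 fun h => ?_⟩
  · have herror : (10 : ℝ) * 2 ^ h - (h ^ 2 + 6 * h + 15) ≤ 10 / √h * h * 2 ^ h := by
      rcases eq_or_ne h 0 with rfl | hh
      · norm_num
      · have h10 := mul_le_mul_of_nonneg_right (le_div_sqrt_mul_self (C := 10) (by norm_num) hh)
          (by positivity : (0 : ℝ) ≤ 2 ^ h)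
        linarith [(by positivity : (0 : ℝ) ≤ h ^ 2 + 6 * h + 15)]
    linarith [hupper h t]
  · have hpath : (pathCost (h + 0 + 1) : ℝ) ≤ (h + 2) ^ 2 + 1 := by
      exact_mod_cast pathCost_le (h + 1)
    rw [abs_le]
    constructor
    · linarith [recurrence_lower_bound hP1 hPrec h 0, (by positivity : (0 : ℝ) ≤ 2 ^ h)]
    · linarith [hupper h 0]
end
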